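/- (Tail translation estimate for Lipschitz kernels.) Let σ ∈ [1,2), Λ > 0, and let K: ℝ^n∖{0} → [0,Λ] be differentiable with |DK(y)| ≤ Λ|y|^{−1} for all y ≠ 0. Set K^σ(y) = (2−σ) K(y) |y|^{−(n+σ)}. Then there exists a constant C > 0 depending only on n and Λ (in particular independent of σ ∈ [1,2)) such that for every x ∈ ℝ^n with |x| ≤ 1/8: ∫_{ℝ^n} | K^σ(y−x)·1_{B_1^c}(y−x) − K^σ(y)·1_{B_1^c}(y) | dy ≤ C|x|. -/

import Mathlib

open MeasureTheory Metric Set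
open scoped RealInnerProductSpace ENNReal

noncomputable section

/-- Euclidean space ℝ^n. -/
abbrev En (n : ℕ) : Type := EuclideanSpace ℝ (Fin n)

/-- Second-order increment δu(x;y) = u(x+y) − u(x) − ∇u(x)·y·1_{B₁}(y). -/
def deltaU (n : ℕ) (u : En n → ℝ) (x y : En n) : ℝ :=
  u (x + y) - u x - (ball (0 : En n) 1).indicator (fun z => ⟪gradient u x, z⟫) y

/-- The linear operator L_{K,b}^σ. -/
def Lop (n : ℕ) (σ : ℝ) (K : En n → ℝ) (b : En n) (u : En n → ℝ) (x : En n) : ℝ :=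
  (2 - σ) * ∫ y : En n, deltaU n u x y * K y / ‖y‖ ^ ((n : ℝ) + σ) + ⟪b, gradient u x⟫

/-- Membership in the class 𝓛₀^σ(λ,Λ,β), as a predicate on the pair (K, b). -/
def memL0 (n : ℕ) (σ lam Lam β : ℝ) (p : (En n → ℝ) × En n) : Prop :=
  Measurable p.1 ∧ (∀ᵐ y : En n, lam ≤ p.1 y ∧ p.1 y ≤ Lam) ∧
    ∀ r : ℝ, 0 < r → r < 1 →
      ‖p.2 + (2 - σ) • ∫ y in ball (0 : En n) 1 \ ball 0 r,
          (p.1 y / ‖y‖ ^ ((n : ℝ) + σ)) • y‖ ≤ β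

/-- Membership in the class 𝓛₁^σ(λ,Λ,β). -/
def memL1 (n : ℕ) (σ lam Lam β : ℝ) (p : (En n → ℝ) × En n) : Prop :=
  memL0 n σ lam Lam β p ∧
    ∀ y : En n, y ≠ 0 → DifferentiableAt ℝ p.1 y ∧ ‖fderiv ℝ p.1 y‖ ≤ Lam / ‖y‖

/-- Membership in the class 𝓛₂^σ(λ,Λ,β). -/
def memL2 (n : ℕ) (σ lam Lam β : ℝ) (p : (En n → ℝ) × En n) : Prop :=
  memL1 n σ lam Lam β p ∧
    ∀ y : En n, y ≠ 0 → DifferentiableAt ℝ (fderiv ℝ p.1) y ∧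
      ‖fderiv ℝ (fderiv ℝ p.1) y‖ ≤ Lam / ‖y‖ ^ 2

/-- Extremal operator M⁻_𝓛. -/
def Mminus (n : ℕ) (σ : ℝ) (𝓛 : Set ((En n → ℝ) × En n)) (u : En n → ℝ) (x : En n) : ℝ :=
  ⨅ p : 𝓛, Lop n σ p.1.1 p.1.2 u x

/-- Extremal operator M⁺_𝓛. -/
def Mplus (n : ℕ) (σ : ℝ) (𝓛 : Set ((En n → ℝ) × En n)) (u : En n → ℝ) (x : En n) : ℝ :=
  ⨆ p : 𝓛, Lop n σ p.1.1 p.1.2 u x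

/-- The weighted L¹(ω_σ) norm, ω_σ(y) = min(1, |y|^{−(n+σ)}). -/
def wnorm (n : ℕ) (σ : ℝ) (v : En n → ℝ) : ℝ≥0∞ :=
  ∫⁻ y : En n, ENNReal.ofReal (|v y| * min 1 (‖y‖ ^ (-((n : ℝ) + σ))))

/-- ‖u‖_{L¹((t₁,t₂]→L¹(ω_σ))}. -/
def timeL1 (n : ℕ) (σ t₁ t₂ : ℝ) (u : En n → ℝ → ℝ) : ℝ≥0∞ :=
  ∫⁻ t in Set.Ioc t₁ t₂, wnorm n σ (fun y => u y t)

/-- ‖u‖_{L^∞((t₁,t₂]→L¹(ω_σ))}. -/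
def timeLinf (n : ℕ) (σ t₁ t₂ : ℝ) (u : En n → ℝ → ℝ) : ℝ≥0∞ :=
  ⨆ t ∈ Set.Ioc t₁ t₂, wnorm n σ (fun y => u y t)

/-- [u]_{C^{0,1}((t₁,t₂]→L¹(ω_σ))}. -/
def timeLip (n : ℕ) (σ t₁ t₂ : ℝ) (u : En n → ℝ → ℝ) : ℝ≥0∞ :=
  ⨆ (t : ℝ) (τ : ℝ) (_ : t₁ < t - τ) (_ : t ≤ t₂) (_ : 0 < τ),
    wnorm n σ (fun y => u y t - u y (t - τ)) / ENNReal.ofReal τ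

/-- u is C² in x, C¹ in t, with u, ∇u, D²u, ∂ₜu bounded and continuous. -/
def RegBC (n : ℕ) (u : En n → ℝ → ℝ) : Prop :=
  (∀ t : ℝ, ContDiff ℝ 2 fun x => u x t) ∧
  (∀ x : En n, ContDiff ℝ 1 fun t => u x t) ∧
  Continuous (fun p : En n × ℝ => u p.1 p.2) ∧
  Continuous (fun p : En n × ℝ => gradient (fun x => u x p.2) p.1) ∧
  Continuous (fun p : En n × ℝ => fderiv ℝ (fderiv ℝ (fun x => u x p.2)) p.1) ∧
  Continuous (fun p : En n × ℝ => deriv (fun s => u p.1 s) p.2) ∧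
  ∃ M : ℝ, ∀ (x : En n) (t : ℝ),
    |u x t| ≤ M ∧ ‖gradient (fun z => u z t) x‖ ≤ M ∧
    ‖fderiv ℝ (fderiv ℝ (fun z => u z t)) x‖ ≤ M ∧ |deriv (fun s => u x s) t| ≤ M

/-- Standing assumptions of Sections 3–5 of the paper. -/
def Standing (n : ℕ) (σ lam Lam β : ℝ) (𝓛 : Set ((En n → ℝ) × En n))
    (u : En n → ℝ → ℝ) : Prop :=
  1 ≤ σ ∧ σ < 2 ∧ 0 < lam ∧ lam ≤ Lam ∧ 0 ≤ β ∧
  𝓛.Nonempty ∧ (∀ p ∈ 𝓛, memL2 n σ lam Lam β p) ∧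
  RegBC n u ∧
  (∀ x ∈ ball (0 : En n) 8, ∀ t ∈ Set.Ioc (-3 : ℝ) 0,
    deriv (fun s => u x s) t = Mminus n σ 𝓛 (fun z => u z t) x) ∧
  timeLinf n σ (-3) 0 u + timeLip n σ (-3) 0 u ≤ 1

private lemma rpow_neg_base_anti {a b q : ℝ} (ha : 0 < a) (hab : a ≤ b) (hq : 0 ≤ q) :
    b ^ (-q) ≤ a ^ (-q) := by
  rw [Real.rpow_neg (ha.trans_le hab).le, Real.rpow_neg ha.le]
  exact inv_anti₀ (Real.rpow_pos_of_pos ha q) (Real.rpow_le_rpow ha.le hab hq)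

private lemma abs_rpow_neg_sub_le {p m a b : ℝ} (hp : 0 ≤ p) (hm : 0 < m)
    (ha : m ≤ a) (hb : m ≤ b) :
    |a ^ (-p) - b ^ (-p)| ≤ p * m ^ (-(p + 1)) * |a - b| := by
  have key := Convex.norm_image_sub_le_of_norm_hasDerivWithin_le
    (f := fun r : ℝ => r ^ (-p)) (f' := fun r : ℝ => (-p) * r ^ (-p - 1))
    (s := Set.Ici m) (C := p * m ^ (-(p + 1)))
    (fun r hr => (Real.hasDerivAt_rpow_const
        (Or.inl (ne_of_gt (hm.trans_le hr)))).hasDerivWithinAt)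
    (fun r hr => ?_) (convex_Ici m) hb ha
  · simpa [Real.norm_eq_abs] using key
  · have h1 : (-p - 1 : ℝ) = -(p + 1) := by ring
    have h2 : r ^ (-p - 1) ≤ m ^ (-(p + 1)) := by
      rw [h1]; exact rpow_neg_base_anti hm hr (by linarith)
    have h3 : (0:ℝ) ≤ r ^ (-p-1) := Real.rpow_nonneg (hm.trans_le hr).le _
    calc ‖(-p) * r ^ (-p - 1)‖ = p * r ^ (-p - 1) := by
            rw [norm_mul, Real.norm_eq_abs, Real.norm_eq_abs, abs_of_nonpos (by linarith),
              abs_of_nonneg h3, neg_neg]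
      _ ≤ p * m ^ (-(p + 1)) := by
            exact mul_le_mul_of_nonneg_left h2 hp

private lemma segment_norm_ge {n : ℕ} (x y : En n) :
    ∀ z ∈ segment ℝ (y - x) y, ‖y‖ - ‖x‖ ≤ ‖z‖ := by
  rintro z ⟨s, t, hs, ht, hst, rfl⟩
  have h : s • (y - x) + t • y = y - s • x := by
    rw [smul_sub, sub_add_eq_add_sub, ← add_smul, hst, one_smul]
  rw [h]
  have h1 : ‖s • x‖ ≤ ‖x‖ := by
    rw [norm_smul, Real.norm_eq_abs, abs_of_nonneg hs]
    nlinarith [norm_nonneg x]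
  have h2 := norm_sub_norm_le y (s • x)
  linarith

private lemma abs_K_sub_le {n : ℕ} {Lam : ℝ} (hLam : 0 < Lam) {K : En n → ℝ}
    (hK' : ∀ y : En n, y ≠ 0 → DifferentiableAt ℝ K y ∧ ‖fderiv ℝ K y‖ ≤ Lam / ‖y‖)
    {a b : En n} {m : ℝ} (hm : 0 < m) (hseg : ∀ z ∈ segment ℝ a b, m ≤ ‖z‖) :
    |K b - K a| ≤ Lam / m * ‖b - a‖ := by
  have key := Convex.norm_image_sub_le_of_norm_hasFDerivWithin_le
    (f := K) (f' := fun z => fderiv ℝ K z) (s := segment ℝ a b) (C := Lam / m)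
    (fun z hz => by
      have hz0 : z ≠ 0 := norm_pos_iff.mp (hm.trans_le (hseg z hz))
      exact ((hK' z hz0).1.hasFDerivAt).hasFDerivWithinAt)
    (fun z hz => by
      have hz0 : z ≠ 0 := norm_pos_iff.mp (hm.trans_le (hseg z hz))
      refine ((hK' z hz0).2).trans ?_
      gcongr
      exact hseg z hz)
    (convex_segment a b) (left_mem_segment ℝ a b) (right_mem_segment ℝ a b)
  simpa [Real.norm_eq_abs] using key


private lemma boundA {n : ℕ} {σ Lam : ℝ} (hσ1 : 1 ≤ σ) (hσ2 : σ < 2) (hLam : 0 < Lam)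
    {K : En n → ℝ} (hK : ∀ y, 0 ≤ K y ∧ K y ≤ Lam)
    (hK' : ∀ y : En n, y ≠ 0 → DifferentiableAt ℝ K y ∧ ‖fderiv ℝ K y‖ ≤ Lam / ‖y‖)
    {x y : En n} (hx : ‖x‖ ≤ 1/8) (hy : 1 ≤ ‖y‖) (hyx : 1 ≤ ‖y - x‖) :
    |(2-σ) * K (y-x) / ‖y-x‖ ^ ((n:ℝ)+σ) - (2-σ) * K y / ‖y‖ ^ ((n:ℝ)+σ)|
      ≤ (Lam * ((n:ℝ)+3) * (8/7 : ℝ) ^ ((n:ℝ)+3)) * ‖x‖ * ‖y‖ ^ (-((n:ℝ)+2)) := by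
  set p : ℝ := (n:ℝ) + σ with hp
  have hp0 : 0 ≤ p := by positivity
  set t : ℝ := ‖x‖ with ht
  have ht0 : 0 ≤ t := norm_nonneg x
  set m : ℝ := ‖y‖ - t with hm
  have hm78 : 7/8 ≤ m := by simp only [hm]; linarith
  have hm0 : 0 < m := by linarith
  have hmy : (7/8) * ‖y‖ ≤ m := by
    have h8 : t ≤ (1/8) * ‖y‖ := le_trans hx (by linarith)
    simp only [hm]; linarith
  have hmyx : m ≤ ‖y - x‖ := by
    simp only [hm]; linarith [norm_sub_norm_le y x]
  have hmyy : m ≤ ‖y‖ := by simp only [hm]; linarith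
  have hW : ∀ z : En n, ((2:ℝ)-σ) * K z / ‖z‖ ^ p = (2-σ) * (K z * ‖z‖ ^ (-p)) := by
    intro z
    rw [Real.rpow_neg (norm_nonneg z)]
    ring
  simp only [hW]
  rw [show (2-σ) * (K (y-x) * ‖y-x‖ ^ (-p)) - (2-σ) * (K y * ‖y‖ ^ (-p))
      = (2-σ) * ((K (y-x) - K y) * ‖y-x‖ ^ (-p) + K y * (‖y-x‖ ^ (-p) - ‖y‖ ^ (-p))) by ring]
  set Wa := ‖y - x‖ ^ (-p) with hWa'
  set Wb := ‖y‖ ^ (-p) with hWb'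
  have hWa0 : 0 ≤ Wa := Real.rpow_nonneg (norm_nonneg _) _
  have hKlip : |K (y-x) - K y| ≤ Lam / m * t := by
    have hseg : ∀ z ∈ segment ℝ (y - x) y, m ≤ ‖z‖ := by
      intro z hz; have := segment_norm_ge x y z hz; simp only [hm]; linarith
    have h := abs_K_sub_le hLam hK' hm0 hseg
    rw [show y - (y - x) = x by abel] at h
    rw [abs_sub_comm]; exact h
  have hWlip : |Wa - Wb| ≤ p * m ^ (-(p+1)) * t := by
    have h := abs_rpow_neg_sub_le hp0 hm0 hmyx hmyy
    refine h.trans ?_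
    have h2 : |‖y - x‖ - ‖y‖| ≤ t := by
      have h3 := abs_norm_sub_norm_le (y - x) y
      rw [show y - x - y = -x by abel, norm_neg] at h3
      exact h3
    have h4 : 0 ≤ p * m ^ (-(p+1)) := mul_nonneg hp0 (Real.rpow_nonneg hm0.le _)
    exact mul_le_mul_of_nonneg_left h2 h4
  have hWam : Wa ≤ m ^ (-p) := rpow_neg_base_anti hm0 hmyx hp0
  have hKyb : |K y| ≤ Lam := by
    rw [abs_of_nonneg (hK y).1]; exact (hK y).2
  have hsplit : m ^ (-(p+1)) = m ^ (-p) * m⁻¹ := by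
    rw [show -(p+1) = -p + (-1) by ring, Real.rpow_add hm0, Real.rpow_neg_one]
  have hmb : m ^ (-(p+1)) ≤ (8/7:ℝ)^((n:ℝ)+3) * ‖y‖ ^ (-((n:ℝ)+2)) := by
    have hy0 : (0:ℝ) < (7/8) * ‖y‖ := by linarith
    have e1 : m ^ (-(p+1)) ≤ ((7/8)*‖y‖) ^ (-(p+1)) :=
      rpow_neg_base_anti hy0 hmy (by linarith)
    have e2 : ((7/8:ℝ)*‖y‖) ^ (-(p+1)) = (7/8:ℝ)^(-(p+1)) * ‖y‖^(-(p+1)) :=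
      Real.mul_rpow (by norm_num) (norm_nonneg y)
    have e3 : (7/8:ℝ)^(-(p+1)) = (8/7:ℝ)^(p+1) := by
      rw [show (8/7:ℝ) = (7/8:ℝ)⁻¹ by norm_num, Real.inv_rpow (by norm_num),
        ← Real.rpow_neg (by norm_num)]
    have e4 : (8/7:ℝ)^(p+1) ≤ (8/7:ℝ)^((n:ℝ)+3) :=
      Real.rpow_le_rpow_of_exponent_le (by norm_num) (by simp only [hp]; linarith)
    have e5 : ‖y‖^(-(p+1)) ≤ ‖y‖^(-((n:ℝ)+2)) :=
      Real.rpow_le_rpow_of_exponent_le hy (by simp only [hp]; linarith)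
    calc m ^ (-(p+1)) ≤ (7/8:ℝ)^(-(p+1)) * ‖y‖^(-(p+1)) := by rw [← e2]; exact e1
      _ = (8/7:ℝ)^(p+1) * ‖y‖^(-(p+1)) := by rw [e3]
      _ ≤ (8/7:ℝ)^((n:ℝ)+3) * ‖y‖ ^ (-((n:ℝ)+2)) :=
          mul_le_mul e4 e5 (Real.rpow_nonneg (norm_nonneg y) _)
            (Real.rpow_nonneg (by norm_num) _)
  have h21 : |2 - σ| ≤ 1 := by rw [abs_of_nonneg (by linarith)]; linarith
  calc |(2-σ) * ((K (y-x) - K y) * Wa + K y * (Wa - Wb))|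
      ≤ 1 * |(K (y-x) - K y) * Wa + K y * (Wa - Wb)| := by
        rw [abs_mul]
        exact mul_le_mul_of_nonneg_right h21 (abs_nonneg _)
    _ = |(K (y-x) - K y) * Wa + K y * (Wa - Wb)| := one_mul _
    _ ≤ |K (y-x) - K y| * Wa + |K y| * |Wa - Wb| := by
        refine (abs_add_le _ _).trans ?_
        rw [abs_mul, abs_mul, abs_of_nonneg hWa0]
    _ ≤ (Lam / m * t) * m ^ (-p) + Lam * (p * m ^ (-(p+1)) * t) :=
        add_le_add
          (mul_le_mul hKlip hWam hWa0 (mul_nonneg (div_nonneg hLam.le hm0.le) ht0))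
          (mul_le_mul hKyb hWlip (abs_nonneg _) hLam.le)
    _ = Lam * t * ((1+p) * m ^ (-(p+1))) := by
        rw [hsplit, div_eq_mul_inv]; ring
    _ ≤ Lam * t * ((((n:ℝ)+3)) * ((8/7:ℝ)^((n:ℝ)+3) * ‖y‖ ^ (-((n:ℝ)+2)))) := by
        have hnp : 1 + p ≤ (n:ℝ)+3 := by simp only [hp]; linarith
        have hrp : (0:ℝ) ≤ (8/7:ℝ)^((n:ℝ)+3) * ‖y‖ ^ (-((n:ℝ)+2)) :=
          mul_nonneg (Real.rpow_nonneg (by norm_num) _) (Real.rpow_nonneg (norm_nonneg y) _)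
        refine mul_le_mul_of_nonneg_left ?_ (mul_nonneg hLam.le ht0)
        exact mul_le_mul hnp hmb (Real.rpow_nonneg hm0.le _) (by positivity)
    _ = (Lam * ((n:ℝ)+3) * (8/7 : ℝ) ^ ((n:ℝ)+3)) * t * ‖y‖ ^ (-((n:ℝ)+2)) := by ring

private lemma pow_annulus {t : ℝ} (ht0 : 0 ≤ t) (ht1 : t ≤ 1) (n : ℕ) :
    (1+t)^n - (1-t)^n ≤ (n : ℝ) * 2^(n+1) * t := by
  have h := geom_sum₂_mul (1+t) (1-t) n
  have hsum : (∑ i ∈ Finset.range n, (1+t)^i * (1-t)^(n-1-i)) ≤ (n:ℝ) * 2^n := by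
    calc ∑ i ∈ Finset.range n, (1+t)^i * (1-t)^(n-1-i)
        ≤ ∑ _i ∈ Finset.range n, (2:ℝ)^n := by
          refine Finset.sum_le_sum fun i hi => ?_
          have h1 : (1+t)^i ≤ (2:ℝ)^n :=
            le_trans (pow_le_pow_left₀ (by linarith) (by linarith) i)
              (pow_le_pow_right₀ (by norm_num) (Finset.mem_range.mp hi).le)
          have h2 : (1-t)^(n-1-i) ≤ 1 := pow_le_one₀ (by linarith) (by linarith)
          calc (1+t)^i * (1-t)^(n-1-i) ≤ (2:ℝ)^n * 1 :=
                mul_le_mul h1 h2 (pow_nonneg (by linarith) _) (by positivity)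
            _ = (2:ℝ)^n := mul_one _
      _ = (n:ℝ) * 2^n := by
          rw [Finset.sum_const, Finset.card_range, nsmul_eq_mul]
  calc (1+t)^n - (1-t)^n
      = (∑ i ∈ Finset.range n, (1+t)^i * (1-t)^(n-1-i)) * (2*t) := by
        rw [← h]; ring_nf
    _ ≤ ((n:ℝ) * 2^n) * (2*t) := mul_le_mul_of_nonneg_right hsum (by linarith)
    _ = (n:ℝ) * 2^(n+1) * t := by ring

private lemma annulus_measure {n : ℕ} [Nontrivial (En n)] {t : ℝ} (ht0 : 0 ≤ t) (ht1 : t ≤ 1) :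
    volume (closedBall (0 : En n) (1+t) \ ball (0 : En n) (1-t))
      ≤ ENNReal.ofReal ((n:ℝ) * 2^(n+1) * t) * volume (ball (0 : En n) 1) := by
  rw [measure_diff ((ball_subset_closedBall).trans (closedBall_subset_closedBall (by linarith)))
      measurableSet_ball.nullMeasurableSet measure_ball_lt_top.ne]
  rw [Measure.addHaar_closedBall _ _ (by linarith : (0:ℝ) ≤ 1+t),
    Measure.addHaar_ball _ _ (by linarith : (0:ℝ) ≤ 1-t)]
  rw [tsub_le_iff_right, ← add_mul, ← ENNReal.ofReal_add (mul_nonneg (by positivity) ht0) (pow_nonneg (by linarith) _)]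
  refine mul_le_mul_left (ENNReal.ofReal_le_ofReal ?_) _
  have hfr : Module.finrank ℝ (En n) = n := finrank_euclideanSpace_fin
  rw [hfr]
  have := pow_annulus ht0 ht1 n
  linarith

private lemma tail_lintegral_lt_top (n : ℕ) :
    (∫⁻ y in (ball (0 : En n) 1)ᶜ, ENNReal.ofReal (‖y‖ ^ (-((n:ℝ)+2)))) < ⊤ := by
  set q : ℝ := (n:ℝ) + 2 with hq
  have hq0 : (0:ℝ) ≤ q := by positivity
  have hmeas : Measurable (fun y : En n => ENNReal.ofReal ((2:ℝ)^q * (1+‖y‖) ^ (-q))) := by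
    fun_prop
  calc (∫⁻ y in (ball (0 : En n) 1)ᶜ, ENNReal.ofReal (‖y‖ ^ (-q)))
      ≤ ∫⁻ y in (ball (0 : En n) 1)ᶜ, ENNReal.ofReal ((2:ℝ)^q * (1+‖y‖) ^ (-q)) := by
        refine setLIntegral_mono hmeas fun y hy => ?_
        have hy1 : 1 ≤ ‖y‖ := by
          simp only [mem_compl_iff, mem_ball, dist_zero_right, not_lt] at hy
          exact hy
        apply ENNReal.ofReal_le_ofReal
        have ha : (0:ℝ) < ‖y‖ ^ q := Real.rpow_pos_of_pos (by linarith) _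
        have hb : (0:ℝ) < (1+‖y‖) ^ q := Real.rpow_pos_of_pos (by linarith) _
        have h1 : (1+‖y‖) ^ q ≤ (2:ℝ)^q * ‖y‖ ^ q := by
          rw [← Real.mul_rpow (by norm_num) (norm_nonneg y)]
          exact Real.rpow_le_rpow (by linarith) (by linarith) hq0
        rw [Real.rpow_neg (norm_nonneg y), Real.rpow_neg (by linarith : (0:ℝ) ≤ 1+‖y‖),
          ← div_eq_mul_inv, inv_eq_one_div, div_le_div_iff₀ ha hb]
        linarith
    _ ≤ ∫⁻ y : En n, ENNReal.ofReal ((2:ℝ)^q * (1+‖y‖) ^ (-q)) :=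
        setLIntegral_le_lintegral _ _
    _ = ENNReal.ofReal ((2:ℝ)^q) * ∫⁻ y : En n, ENNReal.ofReal ((1+‖y‖) ^ (-q)) := by
        have hsplit : ∀ y : En n, ENNReal.ofReal ((2:ℝ)^q * (1+‖y‖) ^ (-q))
            = ENNReal.ofReal ((2:ℝ)^q) * ENNReal.ofReal ((1+‖y‖) ^ (-q)) :=
          fun y => ENNReal.ofReal_mul (by positivity)
        simp_rw [hsplit]
        rw [lintegral_const_mul' _ _ ENNReal.ofReal_ne_top]
    _ < ⊤ := by
        refine ENNReal.mul_lt_top ENNReal.ofReal_lt_top ?_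
        have : (Module.finrank ℝ (En n) : ℝ) < q := by
          rw [finrank_euclideanSpace_fin]; simp only [hq]; norm_num
        exact finite_integral_one_add_norm this
/-- **Tail translation estimate for Lipschitz kernels.** -/
theorem tail_translation_estimate (n : ℕ) (Lam : ℝ) (hLam : 0 < Lam) :
    ∃ C : ℝ, 0 < C ∧
      ∀ σ : ℝ, 1 ≤ σ → σ < 2 →
      ∀ K : En n → ℝ, (∀ y, 0 ≤ K y ∧ K y ≤ Lam) →
      (∀ y : En n, y ≠ 0 → DifferentiableAt ℝ K y ∧ ‖fderiv ℝ K y‖ ≤ Lam / ‖y‖) →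
      ∀ x : En n, ‖x‖ ≤ 1/8 →
        (∫⁻ y : En n, ENNReal.ofReal
            |((ball (0 : En n) 1)ᶜ).indicator
                (fun z => (2 - σ) * K z / ‖z‖ ^ ((n : ℝ) + σ)) (y - x)
              - ((ball (0 : En n) 1)ᶜ).indicator
                  (fun z => (2 - σ) * K z / ‖z‖ ^ ((n : ℝ) + σ)) y|)
          ≤ ENNReal.ofReal (C * ‖x‖) := by
  rcases eq_or_ne n 0 with hn | hn
  · subst hn
    refine ⟨1, one_pos, ?_⟩
    intro σ hσ1 hσ2 K hK hK' x hx
    haveI : Subsingleton (En 0) := ⟨fun a b => by ext i; exact i.elim0⟩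
    have hz : ∀ y : En 0, y ∉ (ball (0 : En 0) 1)ᶜ := by
      intro y hy
      exact hy (by rw [Subsingleton.elim y (0 : En 0)]; exact mem_ball_self one_pos)
    have h0 : ∀ y : En 0, ENNReal.ofReal
        |((ball (0 : En 0) 1)ᶜ).indicator
            (fun z => (2 - σ) * K z / ‖z‖ ^ ((0 : ℝ) + σ)) (y - x)
          - ((ball (0 : En 0) 1)ᶜ).indicator
              (fun z => (2 - σ) * K z / ‖z‖ ^ ((0 : ℝ) + σ)) y| = 0 := by
      intro y
      rw [Set.indicator_of_notMem (hz _), Set.indicator_of_notMem (hz _)]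
      simp
    simp only [Nat.cast_zero] at h0 ⊢
    rw [lintegral_congr h0, lintegral_zero]
    exact zero_le
  · haveI : Nontrivial (En n) := by
      have h := Nat.pos_of_ne_zero hn
      refine ⟨EuclideanSpace.single ⟨0, h⟩ (1:ℝ), 0, fun hc => ?_⟩
      have h1 : ‖EuclideanSpace.single (⟨0, h⟩ : Fin n) (1:ℝ)‖ = 1 := by
        simp [EuclideanSpace.norm_single]
      rw [hc, norm_zero] at h1
      exact one_ne_zero h1.symm
    set q : ℝ := (n:ℝ) + 2 with hq
    set D : ℝ := Lam * ((n:ℝ)+3) * (8/7:ℝ) ^ ((n:ℝ)+3) with hD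
    have hD0 : 0 < D := by positivity
    set cB : ℝ := (volume (ball (0:En n) 1)).toReal with hcB
    have hcB0 : 0 ≤ cB := ENNReal.toReal_nonneg
    set J : ℝ≥0∞ := ∫⁻ y in (ball (0:En n) 1)ᶜ, ENNReal.ofReal (‖y‖ ^ (-q)) with hJ
    have hJtop : J < ⊤ := tail_lintegral_lt_top n
    set jR : ℝ := J.toReal with hjR
    have hjR0 : 0 ≤ jR := ENNReal.toReal_nonneg
    refine ⟨Lam * ((n:ℝ) * 2^(n+1)) * cB + D * jR + 1, by positivity, ?_⟩
    intro σ hσ1 hσ2 K hK hK' x hx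
    set t : ℝ := ‖x‖ with htt
    have ht0 : 0 ≤ t := norm_nonneg x
    have ht1 : t ≤ 1 := by linarith
    set F : En n → ℝ := ((ball (0:En n) 1)ᶜ).indicator
        (fun z => (2 - σ) * K z / ‖z‖ ^ ((n : ℝ) + σ)) with hF
    set Ann : Set (En n) := closedBall (0:En n) (1+t) \ ball (0:En n) (1-t) with hAnn
    have hmem : ∀ z : En n, z ∈ (ball (0:En n) 1)ᶜ ↔ 1 ≤ ‖z‖ := by
      intro z
      simp [Set.mem_compl_iff, mem_ball, dist_zero_right, not_lt]
    have hfle : ∀ z : En n, 1 ≤ ‖z‖ →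
        0 ≤ (2-σ)*K z/‖z‖^((n:ℝ)+σ) ∧ (2-σ)*K z/‖z‖^((n:ℝ)+σ) ≤ Lam := by
      intro z hz
      have hden : 1 ≤ ‖z‖ ^ ((n:ℝ)+σ) := Real.one_le_rpow hz (by positivity)
      have hnum0 : 0 ≤ (2-σ)*K z := mul_nonneg (by linarith) (hK z).1
      refine ⟨div_nonneg hnum0 (by linarith), ?_⟩
      calc (2-σ)*K z/‖z‖^((n:ℝ)+σ) ≤ (2-σ)*K z := div_le_self hnum0 hden
        _ ≤ 1 * Lam := mul_le_mul (by linarith) (hK z).2 (hK z).1 one_pos.le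
        _ = Lam := one_mul _
    have hpt : ∀ y : En n, ENNReal.ofReal |F (y - x) - F y|
        ≤ Ann.indicator (fun _ => ENNReal.ofReal Lam) y
          + ((ball (0:En n) 1)ᶜ).indicator
              (fun y => ENNReal.ofReal (D * t * ‖y‖ ^ (-q))) y := by
      intro y
      by_cases h1 : 1 ≤ ‖y‖ <;> by_cases h2 : 1 ≤ ‖y - x‖
      · -- both outside the ball : use boundA
        rw [hF, Set.indicator_of_mem ((hmem _).2 h2), Set.indicator_of_mem ((hmem _).2 h1)]
        refine le_trans ?_ (le_add_left le_rfl)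
        rw [Set.indicator_of_mem ((hmem _).2 h1)]
        refine ENNReal.ofReal_le_ofReal ?_
        have hb := boundA hσ1 hσ2 hLam hK hK' hx h1 h2
        rw [hD, hq]
        calc |(2-σ) * K (y-x) / ‖y-x‖ ^ ((n:ℝ)+σ) - (2-σ) * K y / ‖y‖ ^ ((n:ℝ)+σ)|
            ≤ (Lam * ((n:ℝ)+3) * (8/7 : ℝ) ^ ((n:ℝ)+3)) * ‖x‖ * ‖y‖ ^ (-((n:ℝ)+2)) := hb
          _ = Lam * ((n:ℝ)+3) * (8/7:ℝ) ^ ((n:ℝ)+3) * t * ‖y‖ ^ (-((n:ℝ)+2)) := by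
              rw [htt]
      · -- y outside, y - x inside : annulus
        rw [hF, Set.indicator_of_notMem (fun hc => h2 ((hmem _).1 hc)),
          Set.indicator_of_mem ((hmem _).2 h1)]
        have hyAnn : y ∈ Ann := by
          rw [hAnn]
          constructor
          · rw [mem_closedBall, dist_zero_right]
            have := norm_sub_norm_le y x
            have h3 : ‖y - x‖ < 1 := lt_of_not_ge h2
            linarith [norm_sub_norm_le y x]
          · rw [mem_ball, dist_zero_right, not_lt]
            linarith
        rw [Set.indicator_of_mem hyAnn]
        refine le_trans ?_ (le_add_right le_rfl)
        refine ENNReal.ofReal_le_ofReal ?_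
        rw [zero_sub, abs_neg, abs_of_nonneg (hfle y h1).1]
        exact (hfle y h1).2
      · -- y inside, y - x outside : annulus
        rw [hF, Set.indicator_of_mem ((hmem _).2 h2),
          Set.indicator_of_notMem (fun hc => h1 ((hmem _).1 hc))]
        have hyAnn : y ∈ Ann := by
          rw [hAnn]
          have h3 : ‖y‖ < 1 := lt_of_not_ge h1
          have h4 : ‖y - x‖ - ‖x‖ ≤ ‖y‖ := by
            have := norm_sub_norm_le (y - x) y
            rw [show y - x - y = -x by abel, norm_neg] at this
            linarith
          constructor
          · rw [mem_closedBall, dist_zero_right]; linarith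
          · rw [mem_ball, dist_zero_right, not_lt]; linarith
        rw [Set.indicator_of_mem hyAnn]
        refine le_trans ?_ (le_add_right le_rfl)
        refine ENNReal.ofReal_le_ofReal ?_
        rw [sub_zero, abs_of_nonneg (hfle _ h2).1]
        exact (hfle _ h2).2
      · rw [hF, Set.indicator_of_notMem (fun hc => h2 ((hmem _).1 hc)),
          Set.indicator_of_notMem (fun hc => h1 ((hmem _).1 hc))]
        simp
    have hG1meas : Measurable (Ann.indicator (fun _ : En n => ENNReal.ofReal Lam)) :=
      measurable_const.indicator (measurableSet_closedBall.diff measurableSet_ball)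
    have hAnnMeas : MeasurableSet Ann := measurableSet_closedBall.diff measurableSet_ball
    calc (∫⁻ y : En n, ENNReal.ofReal |F (y - x) - F y|)
        ≤ ∫⁻ y : En n, (Ann.indicator (fun _ => ENNReal.ofReal Lam) y
            + ((ball (0:En n) 1)ᶜ).indicator
                (fun y => ENNReal.ofReal (D * t * ‖y‖ ^ (-q))) y) :=
          lintegral_mono hpt
      _ = (∫⁻ y : En n, Ann.indicator (fun _ => ENNReal.ofReal Lam) y)
          + ∫⁻ y : En n, ((ball (0:En n) 1)ᶜ).indicator
              (fun y => ENNReal.ofReal (D * t * ‖y‖ ^ (-q))) y :=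
          lintegral_add_left hG1meas _
      _ ≤ ENNReal.ofReal (Lam * ((n:ℝ)*2^(n+1)*t) * cB) + ENNReal.ofReal (D * t * jR) := by
          gcongr
          · -- annulus part
            rw [lintegral_indicator hAnnMeas, setLIntegral_const]
            calc ENNReal.ofReal Lam * volume Ann
                ≤ ENNReal.ofReal Lam *
                    (ENNReal.ofReal ((n:ℝ) * 2^(n+1) * t) * volume (ball (0:En n) 1)) :=
                  mul_le_mul_right (annulus_measure ht0 ht1) _
              _ = ENNReal.ofReal (Lam * ((n:ℝ)*2^(n+1)*t) * cB) := by
                  rw [show volume (ball (0:En n) 1) = ENNReal.ofReal cB by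
                    rw [hcB, ENNReal.ofReal_toReal measure_ball_lt_top.ne]]
                  rw [← ENNReal.ofReal_mul
                      (mul_nonneg (by positivity : (0:ℝ) ≤ (n:ℝ)*2^(n+1)) ht0),
                    ← ENNReal.ofReal_mul hLam.le]
                  congr 1; ring
          · -- tail part
            rw [lintegral_indicator measurableSet_ball.compl]
            have hsplit : ∀ y : En n, ENNReal.ofReal (D * t * ‖y‖ ^ (-q))
                = ENNReal.ofReal (D * t) * ENNReal.ofReal (‖y‖ ^ (-q)) :=
              fun y => ENNReal.ofReal_mul (mul_nonneg hD0.le ht0)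
            simp_rw [hsplit]
            rw [lintegral_const_mul' _ _ ENNReal.ofReal_ne_top, ← hJ,
              show J = ENNReal.ofReal jR by rw [hjR, ENNReal.ofReal_toReal hJtop.ne],
              ← ENNReal.ofReal_mul (mul_nonneg hD0.le ht0)]
      _ ≤ ENNReal.ofReal ((Lam * ((n:ℝ) * 2^(n+1)) * cB + D * jR + 1) * t) := by
          rw [← ENNReal.ofReal_add (by positivity) (by positivity)]
          refine ENNReal.ofReal_le_ofReal ?_
          nlinarith [ht0]

end
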